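/- arXiv:1802.04079 — 9 statements merged into one kernel-verified Lean document; each statement's English description precedes it below -/
import Mathlib

section
/- Let E be a finite-dimensional real inner product space, Z_1, …, Z_m : E → E self-adjoint linear maps, and p_1, …, p_m nonnegative reals with Σ_{i=1}^m p_i = 1. If G := Σ_{i=1}^m p_i Z_i is positive definite, then Σ_{i=1}^m p_i Z_i G⁻¹ Z_i ⪰ G; equivalently, for every x ∈ E, Σ_{i=1}^m p_i ⟨G⁻¹ Z_i x, Z_i x⟩ ≥ ⟨G x, x⟩. (This is the Jensen-type inequality showing that the acceleration parameter ν is at least 1.) -/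
open RealInnerProductSpace Finset

/-- If Z₁,…,Z_m are self-adjoint, p is a probability vector, and
G := Σ pᵢ Zᵢ is positive definite, then Σ pᵢ Zᵢ G⁻¹ Zᵢ ⪰ G, i.e. for every x,
Σ pᵢ ⟨G⁻¹ Zᵢ x, Zᵢ x⟩ ≥ ⟨G x, x⟩.  (The parameter ν is at least 1.) -/
theorem nu_ge_one {E : Type*} [NormedAddCommGroup E] [InnerProductSpace ℝ E]
    [FiniteDimensional ℝ E] {m : ℕ}
    (Z : Fin m → E →ₗ[ℝ] E) (hZsym : ∀ i, (Z i).IsSymmetric)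
    (p : Fin m → ℝ) (hp : ∀ i, 0 ≤ p i) (hps : ∑ i, p i = 1)
    (G : E →ₗ[ℝ] E) (hG : G = ∑ i, p i • Z i)
    (hGpd : ∀ x : E, x ≠ 0 → 0 < ⟪G x, x⟫)
    (Ginv : E →ₗ[ℝ] E) (hGinv1 : Ginv ∘ₗ G = LinearMap.id)
    (hGinv2 : G ∘ₗ Ginv = LinearMap.id) :
    ∀ x : E, ⟪G x, x⟫ ≤ ∑ i, p i * ⟪Ginv (Z i x), Z i x⟫ := by
  have hGinvG : ∀ u : E, Ginv (G u) = u := fun u => LinearMap.ext_iff.mp hGinv1 u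
  have hGGinv : ∀ u : E, G (Ginv u) = u := fun u => LinearMap.ext_iff.mp hGinv2 u
  have hGsym : G.IsSymmetric := by
    intro u v
    rw [hG]
    simp only [LinearMap.sum_apply, LinearMap.smul_apply, sum_inner, inner_sum,
      real_inner_smul_left, real_inner_smul_right]
    exact Finset.sum_congr rfl fun i _ => by rw [hZsym i u v]
  have hGinvsym : ∀ u v : E, ⟪Ginv u, v⟫ = ⟪u, Ginv v⟫ := by
    intro u v
    calc ⟪Ginv u, v⟫ = ⟪Ginv u, G (Ginv v)⟫ := by rw [hGGinv]
      _ = ⟪G (Ginv u), Ginv v⟫ := (hGsym _ _).symm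
      _ = ⟪u, Ginv v⟫ := by rw [hGGinv]
  have hGnn : ∀ u : E, 0 ≤ ⟪G u, u⟫ := by
    intro u
    rcases eq_or_ne u 0 with h | h
    · simp [h]
    · exact (hGpd u h).le
  have hGinvpsd : ∀ u : E, 0 ≤ ⟪Ginv u, u⟫ := by
    intro u
    have : ⟪Ginv u, u⟫ = ⟪G (Ginv u), Ginv u⟫ := by
      calc ⟪Ginv u, u⟫ = ⟪Ginv u, G (Ginv u)⟫ := by rw [hGGinv]
        _ = ⟪G (Ginv u), Ginv u⟫ := real_inner_comm _ _
    rw [this]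
    exact hGnn _
  intro x
  have key : ∀ i, 2 * ⟪Z i x, x⟫ - ⟪G x, x⟫ ≤ ⟪Ginv (Z i x), Z i x⟫ := by
    intro i
    have h0 : 0 ≤ ⟪Ginv (Z i x - G x), Z i x - G x⟫ := hGinvpsd _
    have h1 : ⟪Ginv (Z i x), G x⟫ = ⟪Z i x, x⟫ := by
      rw [hGinvsym, hGinvG]
    have h2 : ⟪Ginv (G x), Z i x⟫ = ⟪Z i x, x⟫ := by
      rw [hGinvG, real_inner_comm]
    have h3 : ⟪Ginv (G x), G x⟫ = ⟪G x, x⟫ := by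
      rw [hGinvG, real_inner_comm]
    rw [map_sub, inner_sub_left, inner_sub_right, inner_sub_right, h1, h2, h3] at h0
    linarith
  have hsum : ∑ i, p i * ⟪Z i x, x⟫ = ⟪G x, x⟫ := by
    rw [hG]
    simp only [LinearMap.sum_apply, LinearMap.smul_apply, sum_inner, real_inner_smul_left]
  calc ⟪G x, x⟫ = ∑ i, p i * (2 * ⟪Z i x, x⟫ - ⟪G x, x⟫) := by
        simp only [mul_sub]
        rw [Finset.sum_sub_distrib, ← Finset.sum_mul, hps]
        have : ∑ i, p i * (2 * ⟪Z i x, x⟫) = 2 * ⟪G x, x⟫ := by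
          rw [← hsum, Finset.mul_sum]; exact Finset.sum_congr rfl fun i _ => by ring
        rw [this]; ring
    _ ≤ ∑ i, p i * ⟪Ginv (Z i x), Z i x⟫ :=
        Finset.sum_le_sum fun i _ => mul_le_mul_of_nonneg_left (key i) (hp i)
end

section
/- In the projection mixture setup: Σ_{i=1}^m p_i Z_i G⁻¹ Z_i ⪯ (1/μ) · G, where μ = λ_min(G). Equivalently, for every x ∈ E, Σ_{i=1}^m p_i ⟨G⁻¹ Z_i x, Z_i x⟩ ≤ λ_min(G)⁻¹ ⟨G x, x⟩. (This shows the acceleration parameter ν is at most 1/μ.) -/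
open RealInnerProductSpace Finset

/-- In the projection mixture setup, with μ = λ_min(G)
(characterized by: μ‖x‖² ≤ ⟨Gx,x⟩ for all x, with equality attained at some x ≠ 0),
we have Σ pᵢ Zᵢ G⁻¹ Zᵢ ⪯ (1/μ)·G, i.e. for every x,
Σ pᵢ ⟨G⁻¹ Zᵢ x, Zᵢ x⟩ ≤ μ⁻¹ ⟨G x, x⟩.  (The parameter ν is at most 1/μ.) -/
theorem nu_le_inv_mu {E : Type*} [NormedAddCommGroup E] [InnerProductSpace ℝ E]
    [FiniteDimensional ℝ E] {m : ℕ}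
    (Z : Fin m → E →ₗ[ℝ] E) (hZsym : ∀ i, (Z i).IsSymmetric)
    (hZidem : ∀ i, Z i ∘ₗ Z i = Z i)
    (p : Fin m → ℝ) (hp : ∀ i, 0 ≤ p i) (hps : ∑ i, p i = 1)
    (G : E →ₗ[ℝ] E) (hG : G = ∑ i, p i • Z i)
    (hGpd : ∀ x : E, x ≠ 0 → 0 < ⟪G x, x⟫)
    (Ginv : E →ₗ[ℝ] E) (hGinv1 : Ginv ∘ₗ G = LinearMap.id)
    (hGinv2 : G ∘ₗ Ginv = LinearMap.id)
    (μ : ℝ) (hμ1 : ∀ x : E, μ * ‖x‖ ^ 2 ≤ ⟪G x, x⟫)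
    (hμ2 : ∃ x : E, x ≠ 0 ∧ ⟪G x, x⟫ = μ * ‖x‖ ^ 2) :
    ∀ x : E, ∑ i, p i * ⟪Ginv (Z i x), Z i x⟫ ≤ μ⁻¹ * ⟪G x, x⟫ := by
  -- μ > 0
  have hμpos : 0 < μ := by
    obtain ⟨x0, hx0, heq⟩ := hμ2
    have h1 : 0 < μ * ‖x0‖ ^ 2 := heq ▸ hGpd x0 hx0
    have h2 : 0 < ‖x0‖ ^ 2 := pow_pos (norm_pos_iff.mpr hx0) 2
    nlinarith
  -- key: ⟨Ginv y, y⟩ ≤ μ⁻¹ ‖y‖²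
  have key : ∀ y : E, ⟪Ginv y, y⟫ ≤ μ⁻¹ * ‖y‖ ^ 2 := by
    intro y
    set z := Ginv y with hz
    have hGz : G z = y := by
      have := congrArg (fun f => f y) hGinv2
      simpa using this
    have h1 : μ * ‖z‖ ^ 2 ≤ ⟪G z, z⟫ := hμ1 z
    have h2 : ⟪G z, z⟫ ≤ ‖y‖ * ‖z‖ := by
      rw [hGz]; exact real_inner_le_norm y z
    have h3 : μ * ‖z‖ ^ 2 ≤ ‖y‖ * ‖z‖ := h1.trans h2
    have h4 : ⟪z, y⟫ ≤ ‖z‖ * ‖y‖ := real_inner_le_norm z y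
    have hzy : ⟪Ginv y, y⟫ = ⟪z, y⟫ := rfl
    rw [hzy]
    rcases eq_or_lt_of_le (norm_nonneg z) with hz0 | hz0
    · have : z = 0 := by simpa using hz0.symm
      simp [this]
      exact mul_nonneg (inv_nonneg.mpr hμpos.le) (sq_nonneg _)
    · have h5 : μ * ‖z‖ ≤ ‖y‖ := by
        have := mul_le_mul_of_nonneg_right h3 (le_of_lt (inv_pos.mpr hz0))
        calc μ * ‖z‖ = μ * ‖z‖ ^ 2 * ‖z‖⁻¹ := by field_simp
          _ ≤ ‖y‖ * ‖z‖ * ‖z‖⁻¹ := this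
          _ = ‖y‖ := by field_simp
      calc ⟪z, y⟫ ≤ ‖z‖ * ‖y‖ := h4
        _ ≤ (μ⁻¹ * ‖y‖) * ‖y‖ := by
            apply mul_le_mul_of_nonneg_right _ (norm_nonneg y)
            calc ‖z‖ = μ * ‖z‖ * μ⁻¹ := by field_simp
              _ ≤ ‖y‖ * μ⁻¹ := mul_le_mul_of_nonneg_right h5 (le_of_lt (inv_pos.mpr hμpos))
              _ = μ⁻¹ * ‖y‖ := by ring
        _ = μ⁻¹ * ‖y‖ ^ 2 := by ring
  intro x
  -- ‖Z i x‖² = ⟨Z i x, x⟩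
  have hZn : ∀ i, ‖Z i x‖ ^ 2 = ⟪Z i x, x⟫ := by
    intro i
    rw [← real_inner_self_eq_norm_sq]
    calc ⟪Z i x, Z i x⟫ = ⟪x, Z i (Z i x)⟫ := hZsym i x (Z i x)
      _ = ⟪x, Z i x⟫ := by
          have := congrArg (fun f => f x) (hZidem i)
          simp only [LinearMap.comp_apply] at this
          rw [this]
      _ = ⟪Z i x, x⟫ := real_inner_comm _ _
  have hGxx : ⟪G x, x⟫ = ∑ i, p i * ⟪Z i x, x⟫ := by
    rw [hG]
    simp [LinearMap.sum_apply, sum_inner, real_inner_smul_left]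
  calc ∑ i, p i * ⟪Ginv (Z i x), Z i x⟫
      ≤ ∑ i, p i * (μ⁻¹ * ‖Z i x‖ ^ 2) := by
        apply Finset.sum_le_sum
        intro i _
        exact mul_le_mul_of_nonneg_left (key (Z i x)) (hp i)
    _ = μ⁻¹ * ∑ i, p i * ⟪Z i x, x⟫ := by
        rw [Finset.mul_sum]
        apply Finset.sum_congr rfl
        intro i _
        rw [hZn i]; ring
    _ = μ⁻¹ * ⟪G x, x⟫ := by rw [hGxx]
end

section
/- In the projection mixture setup, suppose ν > 0 satisfies Σ_{i=1}^m p_i Z_i G⁻¹ Z_i ⪯ ν G. Then dim E ≤ ν · Σ_{i=1}^m p_i rank(Z_i). (This is the lower bound Rank(A*)/E[Rank(Z)] ≤ ν in the case Range(A*) is the whole space.) -/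
open RealInnerProductSpace Finset

lemma trace_eq_sum_inner_onb {E : Type*} [NormedAddCommGroup E]
    [InnerProductSpace ℝ E] [FiniteDimensional ℝ E] {n : ℕ}
    (b : OrthonormalBasis (Fin n) ℝ E) (T : E →ₗ[ℝ] E) :
    LinearMap.trace ℝ E T = ∑ i, ⟪T (b i), b i⟫ := by
  rw [LinearMap.trace_eq_matrix_trace ℝ b.toBasis, Matrix.trace]
  refine Finset.sum_congr rfl fun i _ => ?_
  rw [Matrix.diag_apply, LinearMap.toMatrix_apply, b.coe_toBasis,
    b.coe_toBasis_repr_apply, b.repr_apply_apply, real_inner_comm]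

/-- In the projection mixture setup, if ν > 0 satisfies
Σ pᵢ Zᵢ G⁻¹ Zᵢ ⪯ ν G, then dim E ≤ ν · Σ pᵢ rank(Zᵢ). -/
theorem dim_le_nu_mul_expected_rank {E : Type*} [NormedAddCommGroup E]
    [InnerProductSpace ℝ E] [FiniteDimensional ℝ E] {m : ℕ}
    (Z : Fin m → E →ₗ[ℝ] E) (hZsym : ∀ i, (Z i).IsSymmetric)
    (hZidem : ∀ i, Z i ∘ₗ Z i = Z i)
    (p : Fin m → ℝ) (hp : ∀ i, 0 ≤ p i) (hps : ∑ i, p i = 1)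
    (G : E →ₗ[ℝ] E) (hG : G = ∑ i, p i • Z i)
    (hGpd : ∀ x : E, x ≠ 0 → 0 < ⟪G x, x⟫)
    (Ginv : E →ₗ[ℝ] E) (hGinv1 : Ginv ∘ₗ G = LinearMap.id)
    (hGinv2 : G ∘ₗ Ginv = LinearMap.id)
    (ν : ℝ) (hνpos : 0 < ν)
    (hν : ∀ x : E, ∑ i, p i * ⟪Ginv (Z i x), Z i x⟫ ≤ ν * ⟪G x, x⟫) :
    (Module.finrank ℝ E : ℝ)
      ≤ ν * ∑ i, p i * (Module.finrank ℝ (LinearMap.range (Z i)) : ℝ) := by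
  set b := stdOrthonormalBasis ℝ E with hb
  -- Sum the hypothesis over the orthonormal basis
  have hsum : ∑ j, ∑ i, p i * ⟪Ginv (Z i (b j)), Z i (b j)⟫
      ≤ ν * ∑ j, ⟪G (b j), b j⟫ := by
    rw [Finset.mul_sum]
    exact Finset.sum_le_sum fun j _ => hν (b j)
  -- trace of Ginv ∘ Z i
  have h1 : ∀ i, ∑ j, ⟪Ginv (Z i (b j)), Z i (b j)⟫
      = LinearMap.trace ℝ E (Ginv ∘ₗ Z i) := by
    intro i
    have e1 : ∑ j, ⟪Ginv (Z i (b j)), Z i (b j)⟫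
        = LinearMap.trace ℝ E ((Z i ∘ₗ Ginv) ∘ₗ Z i) := by
      rw [trace_eq_sum_inner_onb b]
      exact Finset.sum_congr rfl fun j _ => (hZsym i (Ginv (Z i (b j))) (b j)).symm
    rw [e1]
    have e2 : LinearMap.trace ℝ E ((Z i ∘ₗ Ginv) ∘ₗ Z i)
        = LinearMap.trace ℝ E (Z i ∘ₗ (Z i ∘ₗ Ginv)) := LinearMap.trace_mul_comm ℝ _ _
    rw [e2, ← LinearMap.comp_assoc, hZidem i]
    exact LinearMap.trace_mul_comm ℝ _ _
  -- LHS equals finrank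
  have hLHS : ∑ j, ∑ i, p i * ⟪Ginv (Z i (b j)), Z i (b j)⟫
      = (Module.finrank ℝ E : ℝ) := by
    rw [Finset.sum_comm]
    have : ∀ i ∈ Finset.univ, ∑ j, p i * ⟪Ginv (Z i (b j)), Z i (b j)⟫
        = p i * LinearMap.trace ℝ E (Ginv ∘ₗ Z i) := by
      intro i _
      rw [← Finset.mul_sum, h1 i]
    rw [Finset.sum_congr rfl this]
    have e3 : ∑ i, p i * LinearMap.trace ℝ E (Ginv ∘ₗ Z i)
        = LinearMap.trace ℝ E (Ginv ∘ₗ G) := by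
      rw [hG]
      have : Ginv ∘ₗ ∑ i, p i • Z i = ∑ i, p i • (Ginv ∘ₗ Z i) := by
        ext x
        simp [LinearMap.sum_apply]
      rw [this, map_sum]
      exact Finset.sum_congr rfl fun i _ => by rw [map_smul]; rfl
    rw [e3, hGinv1, LinearMap.trace_id]
  -- RHS: trace G = Σ pᵢ rank Zᵢ
  have hRHS : ∑ j, ⟪G (b j), b j⟫
      = ∑ i, p i * (Module.finrank ℝ (LinearMap.range (Z i)) : ℝ) := by
    rw [← trace_eq_sum_inner_onb b, hG, map_sum]
    refine Finset.sum_congr rfl fun i _ => ?_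
    rw [map_smul, smul_eq_mul]
    congr 1
    have hproj : LinearMap.IsProj (LinearMap.range (Z i)) (Z i) := by
      constructor
      · intro x; exact LinearMap.mem_range_self _ x
      · rintro x ⟨y, rfl⟩
        exact congrFun (congrArg (fun f => f.toFun) (hZidem i)) y
    exact hproj.trace
  rw [← hLHS, ← hRHS] at *
  exact hsum
end

section
/- (Main convergence theorem, accelerated sketch-and-project.) In the projection mixture setup, let ν > 0 satisfy Σ_{i=1}^m p_i Z_i G⁻¹ Z_i ⪯ ν G and μ ≤ ν, where μ = λ_min(G) > 0. Fix x*, x₀ ∈ E and set β := 1 − √(μ/ν), γ := 1/√(μν), α := 1/(1 + γν). Run the accelerated iteration along index sequences: v₀ := x₀, y_k := α v_k + (1−α) x_k, g_k := Z_{ω_k}(y_k − x*), x_{k+1} := y_k − g_k, v_{k+1} := β v_k + (1−β) y_k − γ g_k. Then for every k ∈ ℕ, Σ_{ω ∈ {1,…,m}^k} (∏_{j=0}^{k−1} p_{ω_j}) [ ⟨G⁻¹(v_k − x*), v_k − x*⟩ + (1/μ)‖x_k − x*‖² ] ≤ (1 − √(μ/ν))^k · ( ⟨G⁻¹(x₀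 − x*), x₀ − x*⟩ + (1/μ)‖x₀ − x*‖² ), where x_k, v_k denote the iterates produced by the first k entries of ω. -/
open RealInnerProductSpace Finset

/-!
The proof is a Lyapunov argument for `Ψ(x, v) = ⟪G⁻¹(v - x*), v - x*⟫ + ‖x - x*‖² / μ`: one
step contracts `Ψ` in expectation by the factor `1 - s` whenever `0 ≤ s ≤ 1` and `ν s² ≤ μ`,
with `β = 1 - s`, `γ = s / μ` and `α = s / (1 + s)`; the parameters of the theorem are the case
`s = √(μ/ν)`. With `e = y - x*`, the projection step lowers `E‖x - x*‖²` by exactly `⟪G e, e⟫`,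
which pays for the variance `γ² E⟪G⁻¹ Z e, Z e⟫ ≤ γ² ν ⟪G e, e⟫` of the momentum step;
convexity of the quadratic form of `G⁻¹ ⪰ 0` and `G⁻¹ ⪯ 1/μ` then reduce the one-step bound
to `(1 - s)‖(x - x*) - e‖² ≥ 0`.
-/

/-- The accelerated sketch-and-project iteration (Algorithm 1), driven by a finite
index sequence `ω : Fin k → Fin m`.  The value at `k` is the pair `(x_k, v_k)`:
`v₀ := x₀`, `y_k := α v_k + (1−α) x_k`, `g_k := Z_{ω_k}(y_k − x*)`,
`x_{k+1} := y_k − g_k`, `v_{k+1} := β v_k + (1−β) y_k − γ g_k`. -/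
noncomputable def accelIter {E : Type*} [NormedAddCommGroup E] [InnerProductSpace ℝ E]
    {m : ℕ} (Z : Fin m → E →ₗ[ℝ] E) (xstar x₀ : E) (α β γ : ℝ) :
    (k : ℕ) → (Fin k → Fin m) → E × E
  | 0, _ => (x₀, x₀)
  | (k + 1), ω =>
      let prev := accelIter Z xstar x₀ α β γ k (fun j => ω j.castSucc)
      let y := α • prev.2 + (1 - α) • prev.1
      let g := Z (ω (Fin.last k)) (y - xstar)
      (y - g, β • prev.2 + (1 - β) • y - γ • g)

namespace LinearMap

variable {E : Type*} [NormedAddCommGroup E] [InnerProductSpace ℝ E]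

theorem IsSymmetric.of_comp_eq_id {G Ginv : E →ₗ[ℝ] E} (hG : G.IsSymmetric)
    (h : G ∘ₗ Ginv = LinearMap.id) : Ginv.IsSymmetric := by
  intro u w
  calc ⟪Ginv u, w⟫ = ⟪Ginv u, G (Ginv w)⟫ := by rw [← comp_apply, h, id_apply]
    _ = ⟪G (Ginv u), Ginv w⟫ := (hG _ _).symm
    _ = ⟪u, Ginv w⟫ := by rw [← comp_apply, h, id_apply]

theorem IsPositive.of_comp_eq_id {G Ginv : E →ₗ[ℝ] E} (hG : G.IsPositive)
    (h : G ∘ₗ Ginv = LinearMap.id) : Ginv.IsPositive := by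
  refine ⟨hG.isSymmetric.of_comp_eq_id h, fun u => ?_⟩
  have hu : G (Ginv u) = u := by rw [← comp_apply, h, id_apply]
  simpa [hu, real_inner_comm] using hG.re_inner_nonneg_left (Ginv u)

theorem IsPositive.inner_map_convex_comb_le {T : E →ₗ[ℝ] E} (hT : T.IsPositive)
    {a b : ℝ} (ha : 0 ≤ a) (hb : 0 ≤ b) (hab : a + b = 1) (x y : E) :
    ⟪T (a • x + b • y), a • x + b • y⟫ ≤ a * ⟪T x, x⟫ + b * ⟪T y, y⟫ := by
  have hxy : ⟪T y, x⟫ = ⟪T x, y⟫ := by rw [hT.isSymmetric, real_inner_comm]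
  have hgap : 0 ≤ ⟪T (x - y), x - y⟫ := by simpa using hT.re_inner_nonneg_left (x - y)
  obtain rfl : b = 1 - a := by linarith
  simp only [map_add, map_sub, map_smul, inner_add_left, inner_add_right, inner_sub_left,
    inner_sub_right, real_inner_smul_left, real_inner_smul_right, hxy] at hgap ⊢
  nlinarith [mul_nonneg (mul_nonneg ha hb) hgap]

theorem inner_map_self_le_of_comp_eq_id {G Ginv : E →ₗ[ℝ] E} {μ : ℝ} (hμ : 0 < μ)
    (hG : ∀ x, μ * ‖x‖ ^ 2 ≤ ⟪G x, x⟫) (h : G ∘ₗ Ginv = LinearMap.id) (u : E) :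
    ⟪Ginv u, u⟫ ≤ ‖u‖ ^ 2 / μ := by
  set w := Ginv u
  have hw : G w = u := by rw [← comp_apply, h, id_apply]
  have hcoer : μ * ‖w‖ ^ 2 ≤ ‖u‖ * ‖w‖ := (hG w).trans (hw ▸ real_inner_le_norm u w)
  have hnorm : μ * ‖w‖ ≤ ‖u‖ := by
    rcases (norm_nonneg w).eq_or_lt with h0 | hpos
    · simp [← h0]
    · exact le_of_mul_le_mul_right (by nlinarith) hpos
  rw [le_div_iff₀ hμ]
  nlinarith [real_inner_le_norm w u, norm_nonneg u]

theorem norm_sub_apply_sq_of_idempotent {Z : E →ₗ[ℝ] E} (hZ : Z.IsSymmetric)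
    (hZZ : Z ∘ₗ Z = Z) (x : E) : ‖x - Z x‖ ^ 2 = ‖x‖ ^ 2 - ⟪Z x, x⟫ := by
  have hZx : ⟪Z x, Z x⟫ = ⟪Z x, x⟫ := by
    rw [hZ, ← comp_apply, hZZ, real_inner_comm]
  rw [norm_sub_sq_real, ← real_inner_self_eq_norm_sq (Z x), hZx, real_inner_comm]
  ring

theorem sum_mul_inner_map_sub_smul {T : E →ₗ[ℝ] E} (hT : T.IsSymmetric) {ι : Type*}
    [Fintype ι] {p : ι → ℝ} (hp : ∑ i, p i = 1) (w : E) (γ : ℝ) (u : ι → E) :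
    ∑ i, p i * ⟪T (w - γ • u i), w - γ • u i⟫
      = ⟪T w, w⟫ - 2 * γ * ⟪T w, ∑ i, p i • u i⟫ + γ ^ 2 * ∑ i, p i * ⟪T (u i), u i⟫ := by
  have hexpand : ∀ i, ⟪T (w - γ • u i), w - γ • u i⟫
      = ⟪T w, w⟫ - 2 * γ * ⟪T w, u i⟫ + γ ^ 2 * ⟪T (u i), u i⟫ := by
    intro i
    have hsymm : ⟪T (u i), w⟫ = ⟪T w, u i⟫ := by rw [hT, real_inner_comm]
    simp only [map_sub, map_smul, inner_sub_left, inner_sub_right, real_inner_smul_left,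
      real_inner_smul_right, hsymm]
    ring
  rw [← one_mul ⟪T w, w⟫, ← hp]
  simp only [sum_mul, mul_sum, inner_sum, real_inner_smul_right, ← sum_sub_distrib,
    ← sum_add_distrib]
  refine sum_congr rfl fun i _ => ?_
  rw [hexpand]
  ring

end LinearMap

theorem sum_fun_fin_succ {M α : Type*} [AddCommMonoid M] [Fintype α] {k : ℕ}
    (f : (Fin (k + 1) → α) → M) :
    ∑ ω, f ω = ∑ σ : Fin k → α, ∑ i, f (Fin.snoc σ i) := by
  rw [← (Fin.snocEquiv fun _ => α).sum_comp, Fintype.sum_prod_type, sum_comm]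
  rfl

theorem sum_paths_le_pow_of_drift {S : Type*} {m : ℕ} {p : Fin m → ℝ} (hp : ∀ i, 0 ≤ p i)
    {step : Fin m → S → S} {V : S → ℝ} {β : ℝ} (hβ : 0 ≤ β)
    (hdrift : ∀ s, ∑ i, p i * V (step i s) ≤ β * V s)
    {iter : (k : ℕ) → (Fin k → Fin m) → S} {s₀ : S} (hiter₀ : ∀ ω, iter 0 ω = s₀)
    (hiter : ∀ k σ i, iter (k + 1) (Fin.snoc σ i) = step i (iter k σ)) (k : ℕ) :
    ∑ ω : Fin k → Fin m, (∏ j, p (ω j)) * V (iter k ω) ≤ β ^ k * V s₀ := by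
  induction k with
  | zero => simp [hiter₀]
  | succ k ih =>
    calc ∑ ω : Fin (k + 1) → Fin m, (∏ j, p (ω j)) * V (iter (k + 1) ω)
        = ∑ σ : Fin k → Fin m, (∏ j, p (σ j)) * ∑ i, p i * V (step i (iter k σ)) := by
          simp only [sum_fun_fin_succ, Fin.prod_univ_castSucc, Fin.snoc_castSucc,
            Fin.snoc_last, hiter, mul_sum, mul_assoc]
      _ ≤ ∑ σ : Fin k → Fin m, (∏ j, p (σ j)) * (β * V (iter k σ)) :=
          sum_le_sum fun σ _ =>
            mul_le_mul_of_nonneg_left (hdrift _) (prod_nonneg fun j _ => hp _)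
      _ = β * ∑ σ : Fin k → Fin m, (∏ j, p (σ j)) * V (iter k σ) := by
          rw [mul_sum]; exact sum_congr rfl fun σ _ => by ring
      _ ≤ β * (β ^ k * V s₀) := mul_le_mul_of_nonneg_left ih hβ
      _ = β ^ (k + 1) * V s₀ := by ring

/- The gap is `(1 - s) * ‖r - e‖ ^ 2`. -/
theorem inner_momentum_le {E : Type*} [NormedAddCommGroup E] [InnerProductSpace ℝ E]
    {s : ℝ} (hs : s ≤ 1) {d r e : E} (he : (1 + s) • e = s • d + r) :
    s * ‖e‖ ^ 2 - 2 * s * ⟪(1 - s) • d + s • e, e⟫ + ‖e‖ ^ 2 ≤ (1 - s) * ‖r‖ ^ 2 := by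
  have hde : (1 + s) * ‖e‖ ^ 2 = s * ⟪d, e⟫ + ⟪r, e⟫ := by
    simpa [inner_add_left, real_inner_smul_left, real_inner_self_eq_norm_sq] using
      congrArg (⟪·, e⟫) he
  have hgap : 0 ≤ (1 - s) * ‖r - e‖ ^ 2 := mul_nonneg (by linarith) (sq_nonneg _)
  rw [norm_sub_sq_real] at hgap
  simp only [inner_add_left, real_inner_smul_left, real_inner_self_eq_norm_sq]
  nlinarith [hde]

section AcceleratedStep

variable {E : Type*} [NormedAddCommGroup E] [InnerProductSpace ℝ E] {m : ℕ}

def accelStep (Z : Fin m → E →ₗ[ℝ] E) (xstar : E) (α β γ : ℝ) (i : Fin m) (xv : E × E) :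
    E × E :=
  let y := α • xv.2 + (1 - α) • xv.1
  let g := Z i (y - xstar)
  (y - g, β • xv.2 + (1 - β) • y - γ • g)

theorem accelIter_succ_snoc (Z : Fin m → E →ₗ[ℝ] E) (xstar x₀ : E) (α β γ : ℝ) (k : ℕ)
    (σ : Fin k → Fin m) (i : Fin m) :
    accelIter Z xstar x₀ α β γ (k + 1) (Fin.snoc σ i)
      = accelStep Z xstar α β γ i (accelIter Z xstar x₀ α β γ k σ) := by
  simp only [accelIter, accelStep, Fin.snoc_castSucc, Fin.snoc_last]

noncomputable def accelEnergy (Ginv : E →ₗ[ℝ] E) (μ : ℝ) (xstar : E) (xv : E × E) : ℝ :=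
  ⟪Ginv (xv.2 - xstar), xv.2 - xstar⟫ + (1 / μ) * ‖xv.1 - xstar‖ ^ 2

theorem accelEnergy_step_le (Z : Fin m → E →ₗ[ℝ] E) (hZsym : ∀ i, (Z i).IsSymmetric)
    (hZidem : ∀ i, Z i ∘ₗ Z i = Z i) {p : Fin m → ℝ} (hps : ∑ i, p i = 1)
    {G : E →ₗ[ℝ] E} (hG : G = ∑ i, p i • Z i)
    {Ginv : E →ₗ[ℝ] E} (hGinv1 : Ginv ∘ₗ G = LinearMap.id)
    (hGinv2 : G ∘ₗ Ginv = LinearMap.id) {μ ν : ℝ} (hμ : 0 < μ)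
    (hμG : ∀ x : E, μ * ‖x‖ ^ 2 ≤ ⟪G x, x⟫)
    (hν : ∀ x : E, ∑ i, p i * ⟪Ginv (Z i x), Z i x⟫ ≤ ν * ⟪G x, x⟫)
    {s : ℝ} (hs₀ : 0 ≤ s) (hs₁ : s ≤ 1) (hsν : ν * s ^ 2 ≤ μ)
    (xstar : E) (xv : E × E) :
    ∑ i, p i * accelEnergy Ginv μ xstar
        (accelStep Z xstar (s / (1 + s)) (1 - s) (s / μ) i xv)
      ≤ (1 - s) * accelEnergy Ginv μ xstar xv := by
  obtain ⟨x, v⟩ := xv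
  set α := s / (1 + s)
  set d := v - xstar
  set r := x - xstar
  set e := α • v + (1 - α) • x - xstar
  set w := (1 - s) • d + s • e
  have hstep : ∀ i, (accelStep Z xstar α (1 - s) (s / μ) i (x, v)).1 - xstar = e - Z i e ∧
      (accelStep Z xstar α (1 - s) (s / μ) i (x, v)).2 - xstar = w - (s / μ) • Z i e := by
    intro i
    constructor <;> simp only [accelStep, e, w, d] <;> module
  have hGx : ∀ u, G u = ∑ i, p i • Z i u := by
    intro u
    simp [hG, LinearMap.sum_apply]
  have hGpos : G.IsPositive := by
    refine ⟨?_, fun x => le_trans (by positivity) (hμG x)⟩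
    rw [hG]
    exact LinearMap.isSymmetric_sum _ fun i _ => (hZsym i).smul (by simp)
  have hGinvpos : Ginv.IsPositive := hGpos.of_comp_eq_id hGinv2
  have hGe : 0 ≤ ⟪G e, e⟫ := by simpa using hGpos.re_inner_nonneg_left e
  have hv : ∑ i, p i * ⟪Ginv (w - (s / μ) • Z i e), w - (s / μ) • Z i e⟫
      ≤ ⟪Ginv w, w⟫ - 2 * (s / μ) * ⟪w, e⟫ + (1 / μ) * ⟪G e, e⟫ := by
    have hcross : ⟪Ginv w, ∑ i, p i • Z i e⟫ = ⟪w, e⟫ := by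
      rw [← hGx, hGinvpos.isSymmetric, ← LinearMap.comp_apply, hGinv1, LinearMap.id_apply]
    have hvar : (s / μ) ^ 2 * ∑ i, p i * ⟪Ginv (Z i e), Z i e⟫ ≤ (1 / μ) * ⟪G e, e⟫ :=
      calc (s / μ) ^ 2 * ∑ i, p i * ⟪Ginv (Z i e), Z i e⟫
          ≤ (s / μ) ^ 2 * (ν * ⟪G e, e⟫) := by gcongr; exact hν e
        _ = (ν * s ^ 2 / μ) * (1 / μ) * ⟪G e, e⟫ := by ring
        _ ≤ 1 * (1 / μ) * ⟪G e, e⟫ := by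
          gcongr
          exact (div_le_one hμ).2 hsν
        _ = (1 / μ) * ⟪G e, e⟫ := by ring
    rw [LinearMap.sum_mul_inner_map_sub_smul hGinvpos.isSymmetric hps, hcross]
    linarith
  have hx : ∑ i, p i * ‖e - Z i e‖ ^ 2 = ‖e‖ ^ 2 - ⟪G e, e⟫ := by
    simp only [LinearMap.norm_sub_apply_sq_of_idempotent (hZsym _) (hZidem _), mul_sub,
      sum_sub_distrib, ← sum_mul, hps, one_mul, hGx, sum_inner, real_inner_smul_left]
  have hw : ⟪Ginv w, w⟫ ≤ (1 - s) * ⟪Ginv d, d⟫ + s * (‖e‖ ^ 2 / μ) :=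
    (hGinvpos.inner_map_convex_comb_le (by linarith) hs₀ (by ring) d e).trans
      (by gcongr; exact LinearMap.inner_map_self_le_of_comp_eq_id hμ hμG hGinv2 e)
  have hmom : (1 + s) • e = s • d + r := by
    have hα : (1 + s) * α = s := mul_div_cancel₀ s (by positivity)
    have hα' : (1 + s) * (1 - α) = 1 := by linear_combination -hα
    simp only [e, d, r, smul_sub, smul_add, smul_smul, hα, hα']
    module
  simp only [accelEnergy, hstep, mul_add, sum_add_distrib, mul_left_comm _ (1 / μ), ← mul_sum,
    hx]
  calc ∑ i, p i * ⟪Ginv (w - (s / μ) • Z i e), w - (s / μ) • Z i e⟫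
        + 1 / μ * (‖e‖ ^ 2 - ⟪G e, e⟫)
      ≤ (1 - s) * ⟪Ginv d, d⟫ + s * (‖e‖ ^ 2 / μ) - 2 * (s / μ) * ⟪w, e⟫
        + 1 / μ * ‖e‖ ^ 2 := by linarith
    _ = (1 - s) * ⟪Ginv d, d⟫
        + 1 / μ * (s * ‖e‖ ^ 2 - 2 * s * ⟪w, e⟫ + ‖e‖ ^ 2) := by ring
    _ ≤ (1 - s) * ⟪Ginv d, d⟫ + 1 / μ * ((1 - s) * ‖r‖ ^ 2) := by
        gcongr
        exact inner_momentum_le hs₁ hmom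

end AcceleratedStep

theorem one_div_sqrt_mul_eq_sqrt_div_div {μ ν : ℝ} (hμ : 0 < μ) (hν : 0 < ν) :
    1 / √(μ * ν) = √(μ / ν) / μ := by
  have hμ' : 0 < √μ := Real.sqrt_pos.2 hμ
  have hν' : 0 < √ν := Real.sqrt_pos.2 hν
  rw [Real.sqrt_div' _ hν.le, Real.sqrt_mul hμ.le]
  field_simp
  exact (Real.sq_sqrt hμ.le).symm

theorem accelerated_sketch_and_project_convergence_general
    {E : Type*} [NormedAddCommGroup E] [InnerProductSpace ℝ E]
    {m : ℕ}
    (Z : Fin m → E →ₗ[ℝ] E) (hZsym : ∀ i, (Z i).IsSymmetric)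
    (hZidem : ∀ i, Z i ∘ₗ Z i = Z i)
    (p : Fin m → ℝ) (hp : ∀ i, 0 ≤ p i) (hps : ∑ i, p i = 1)
    (G : E →ₗ[ℝ] E) (hG : G = ∑ i, p i • Z i)
    (Ginv : E →ₗ[ℝ] E) (hGinv1 : Ginv ∘ₗ G = LinearMap.id)
    (hGinv2 : G ∘ₗ Ginv = LinearMap.id)
    (μ ν : ℝ) (hμpos : 0 < μ)
    (hμ1 : ∀ x : E, μ * ‖x‖ ^ 2 ≤ ⟪G x, x⟫)
    (hν : ∀ x : E, ∑ i, p i * ⟪Ginv (Z i x), Z i x⟫ ≤ ν * ⟪G x, x⟫)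
    (hμν : μ ≤ ν)
    (xstar x₀ : E) (α β γ : ℝ)
    (hβ : β = 1 - Real.sqrt (μ / ν)) (hγ : γ = 1 / Real.sqrt (μ * ν))
    (hα : α = 1 / (1 + γ * ν)) :
    ∀ k : ℕ,
      ∑ ω : Fin k → Fin m, (∏ j, p (ω j)) *
          (⟪Ginv ((accelIter Z xstar x₀ α β γ k ω).2 - xstar),
              (accelIter Z xstar x₀ α β γ k ω).2 - xstar⟫
            + (1 / μ) * ‖(accelIter Z xstar x₀ α β γ k ω).1 - xstar‖ ^ 2)
        ≤ (1 - Real.sqrt (μ / ν)) ^ k *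
            (⟪Ginv (x₀ - xstar), x₀ - xstar⟫ + (1 / μ) * ‖x₀ - xstar‖ ^ 2) := by
  have hν₀ : 0 < ν := hμpos.trans_le hμν
  set s := √(μ / ν)
  have hs₀ : 0 < s := Real.sqrt_pos.2 (div_pos hμpos hν₀)
  have hs₁ : s ≤ 1 := Real.sqrt_le_one.mpr ((div_le_one hν₀).2 hμν)
  have hsν : ν * s ^ 2 = μ := by
    rw [Real.sq_sqrt (div_pos hμpos hν₀).le]
    field_simp
  have hγs : γ = s / μ := hγ.trans (one_div_sqrt_mul_eq_sqrt_div_div hμpos hν₀)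
  have hαs : α = s / (1 + s) := by
    rw [hα, hγs, ← hsν]
    field_simp
    ring
  subst hβ hγs hαs
  exact sum_paths_le_pow_of_drift hp (by linarith)
    (accelEnergy_step_le Z hZsym hZidem hps hG hGinv1 hGinv2 hμpos hμ1 hν hs₀.le hs₁ hsν.le
      xstar)
    (fun _ => rfl) (accelIter_succ_snoc Z xstar x₀ _ _ _)

/-- (Main convergence theorem, accelerated sketch-and-project.)
In the projection mixture setup, with μ = λ_min(G) > 0, ν ≥ μ satisfying
Σ pᵢ Zᵢ G⁻¹ Zᵢ ⪯ ν G, and parameters β = 1 − √(μ/ν), γ = 1/√(μν), α = 1/(1+γν),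
the expectation over the first k sampled indices of
⟨G⁻¹(v_k − x*), v_k − x*⟩ + (1/μ)‖x_k − x*‖² decays at rate (1 − √(μ/ν))^k. -/
theorem accelerated_sketch_and_project_convergence
    {E : Type*} [NormedAddCommGroup E] [InnerProductSpace ℝ E]
    [FiniteDimensional ℝ E] {m : ℕ}
    (Z : Fin m → E →ₗ[ℝ] E) (hZsym : ∀ i, (Z i).IsSymmetric)
    (hZidem : ∀ i, Z i ∘ₗ Z i = Z i)
    (p : Fin m → ℝ) (hp : ∀ i, 0 ≤ p i) (hps : ∑ i, p i = 1)
    (G : E →ₗ[ℝ] E) (hG : G = ∑ i, p i • Z i)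
    (Ginv : E →ₗ[ℝ] E) (hGinv1 : Ginv ∘ₗ G = LinearMap.id)
    (hGinv2 : G ∘ₗ Ginv = LinearMap.id)
    (μ ν : ℝ) (hμpos : 0 < μ)
    (hμ1 : ∀ x : E, μ * ‖x‖ ^ 2 ≤ ⟪G x, x⟫)
    (hμ2 : ∃ x : E, x ≠ 0 ∧ ⟪G x, x⟫ = μ * ‖x‖ ^ 2)
    (hνpos : 0 < ν)
    (hν : ∀ x : E, ∑ i, p i * ⟪Ginv (Z i x), Z i x⟫ ≤ ν * ⟪G x, x⟫)
    (hμν : μ ≤ ν)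
    (xstar x₀ : E) (α β γ : ℝ)
    (hβ : β = 1 - Real.sqrt (μ / ν)) (hγ : γ = 1 / Real.sqrt (μ * ν))
    (hα : α = 1 / (1 + γ * ν)) :
    ∀ k : ℕ,
      ∑ ω : Fin k → Fin m, (∏ j, p (ω j)) *
          (⟪Ginv ((accelIter Z xstar x₀ α β γ k ω).2 - xstar),
              (accelIter Z xstar x₀ α β γ k ω).2 - xstar⟫
            + (1 / μ) * ‖(accelIter Z xstar x₀ α β γ k ω).1 - xstar‖ ^ 2)
        ≤ (1 - Real.sqrt (μ / ν)) ^ k *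
            (⟪Ginv (x₀ - xstar), x₀ - xstar⟫ + (1 / μ) * ‖x₀ - xstar‖ ^ 2) :=
  accelerated_sketch_and_project_convergence_general Z hZsym hZidem p hp hps G hG Ginv hGinv1 hGinv2
    μ ν hμpos hμ1 hν hμν xstar x₀ α β γ hβ hγ hα
end

section
/- Let μ ≥ 0, ν > 0 and s > 0 be real numbers, and define β(s) := (1 + s − s·√((ν + 4μs − 2νs + νs²)/(ν s²)))/(2s). Then β(s) ≤ 1 and s·β(s) ≤ 1; consequently the convergence rate ρ = max(β(s), s·β(s)) of the accelerated sketch-and-project method with these parameters satisfies ρ ≤ 1. -/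
/-!
Writing `β(s) = (1 + s - t) / (2s)` with `t = s·√(…)`, the radicand times `s²` equals
`(1 - s)² + 4μs/ν ≥ (1 - s)²`, so `t ≥ |1 - s|`. Then `β ≤ 1` is `1 - s ≤ t` and
`s·β = (1 + s - t)/2 ≤ 1` is `s - 1 ≤ t`.
-/

namespace BetaStar

lemma sq_mul_radicand {μ ν s : ℝ} (hν : ν ≠ 0) (hs : s ≠ 0) :
    s ^ 2 * ((ν + 4 * μ * s - 2 * ν * s + ν * s ^ 2) / (ν * s ^ 2)) =
      (1 - s) ^ 2 + 4 * μ * s / ν := by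
  field_simp
  ring

lemma abs_one_sub_le_mul_sqrt_radicand {μ ν s : ℝ} (hμ : 0 ≤ μ) (hν : 0 < ν) (hs : 0 < s) :
    |1 - s| ≤ s * Real.sqrt ((ν + 4 * μ * s - 2 * ν * s + ν * s ^ 2) / (ν * s ^ 2)) := by
  calc |1 - s| = Real.sqrt ((1 - s) ^ 2) := (Real.sqrt_sq_eq_abs _).symm
    _ ≤ Real.sqrt ((1 - s) ^ 2 + 4 * μ * s / ν) :=
      Real.sqrt_le_sqrt (le_add_of_nonneg_right (by positivity))
    _ = _ := by
      rw [← sq_mul_radicand hν.ne' hs.ne', Real.sqrt_mul (sq_nonneg s), Real.sqrt_sq hs.le]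

variable {s t : ℝ}

lemma one_add_sub_div_two_mul_le_one (hs : 0 < s) (ht : 1 - s ≤ t) :
    (1 + s - t) / (2 * s) ≤ 1 := by
  rw [div_le_one (by positivity)]
  linarith

lemma mul_one_add_sub_div_two_mul_le_one (hs : 0 < s) (ht : s - 1 ≤ t) :
    s * ((1 + s - t) / (2 * s)) ≤ 1 := by
  rw [mul_div_assoc', mul_comm 2 s, mul_div_mul_left _ _ hs.ne', div_le_one two_pos]
  linarith

end BetaStar

/-- For μ ≥ 0, ν > 0, s > 0 and
β(s) := (1 + s − s·√((ν + 4μs − 2νs + νs²)/(νs²)))/(2s), one has β(s) ≤ 1 and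
s·β(s) ≤ 1; consequently the rate ρ = max(β(s), s·β(s)) satisfies ρ ≤ 1. -/
theorem beta_star_rate_le_one (μ ν s : ℝ) (hμ : 0 ≤ μ) (hν : 0 < ν) (hs : 0 < s)
    (β : ℝ)
    (hβ : β = (1 + s - s * Real.sqrt ((ν + 4 * μ * s - 2 * ν * s + ν * s ^ 2) / (ν * s ^ 2)))
              / (2 * s)) :
    β ≤ 1 ∧ s * β ≤ 1 ∧ max β (s * β) ≤ 1 := by
  have habs_le := BetaStar.abs_one_sub_le_mul_sqrt_radicand hμ hν hs
  have hβ_le : β ≤ 1 :=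
    hβ ▸ BetaStar.one_add_sub_div_two_mul_le_one hs ((le_abs_self _).trans habs_le)
  have hsβ_le : s * β ≤ 1 := hβ ▸ BetaStar.mul_one_add_sub_div_two_mul_le_one hs
    ((abs_sub_comm s 1 ▸ le_abs_self _).trans habs_le)
  exact ⟨hβ_le, hsβ_le, max_le hβ_le hsβ_le⟩
end

section
/- Let A be an n×n real symmetric positive definite matrix with n ≥ 1, let A^{1/2} denote its (unique) positive semidefinite square root, and let e_i denote the i-th standard basis vector. Define, for i = 1, …, n, the probability p_i := A_{ii}/Tr(A) and the matrix Z_i := (1/A_{ii}) · A^{1/2} e_i e_iᵀ A^{1/2}. Then Σ_{i=1}^n p_i Z_i = A / Tr(A); consequently the smallest eigenvalue of the expected projection E[Z] = Σ_i p_i Z_i equals λ_min(A)/Tr(A), i.e. μ = λ_min(A)/Tr(A) for coordinate sketches with convenient probabilities. -/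
open Matrix Finset Pointwise

open scoped ComplexOrder in
/-- The positive semidefinite square root of a positive semidefinite matrix, as defined in
the older Mathlib (removed since). -/
noncomputable def Matrix.PosSemidef.sqrt {n 𝕜 : Type*} [Fintype n] [DecidableEq n] [RCLike 𝕜]
    {A : Matrix n n 𝕜} (hA : A.PosSemidef) : Matrix n n 𝕜 :=
  (hA.1.eigenvectorUnitary : Matrix n n 𝕜) * diagonal ((↑) ∘ (fun x : ℝ => √x) ∘ hA.1.eigenvalues) *
    (star (hA.1.eigenvectorUnitary : Matrix n n 𝕜))

/-!
Writing `S = A^{1/2}`, the `i`-th term of the sum is `Aᵢᵢ / Tr A · Aᵢᵢ⁻¹ · S eᵢ eᵢᵀ S = S eᵢ eᵢᵀ S / Tr A`,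
and `∑ᵢ eᵢ eᵢᵀ = 1`, so the sum is `S² / Tr A = A / Tr A`. Scaling a Hermitian matrix by
`c ≥ 0` scales its spectrum, hence its smallest eigenvalue, by `c`.
-/

section

variable {n : Type*} [Fintype n] [DecidableEq n]

theorem Matrix.sum_mul_single_one_mul {α : Type*} [NonAssocSemiring α] (M N : Matrix n n α) :
    ∑ i, M * single i i 1 * N = M * N := by
  rw [← Finset.sum_mul, ← Finset.mul_sum, sum_single_one, Matrix.mul_one]

variable {𝕜 : Type*} [RCLike 𝕜]

open scoped ComplexOrder in
theorem Matrix.PosSemidef.sqrt_mul_self {A : Matrix n n 𝕜} (hA : A.PosSemidef) :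
    hA.sqrt * hA.sqrt = A := by
  set U : Matrix n n 𝕜 := (hA.1.eigenvectorUnitary : Matrix n n 𝕜)
  have hU : star U * U = 1 := Unitary.coe_star_mul_self _
  conv_rhs => rw [hA.1.spectral_theorem, Unitary.conjStarAlgAut_apply]
  calc hA.sqrt * hA.sqrt
      = U * diagonal ((↑) ∘ (fun x : ℝ => √x) ∘ hA.1.eigenvalues) * (star U * U) *
          diagonal ((↑) ∘ (fun x : ℝ => √x) ∘ hA.1.eigenvalues) * star U := by
        simp only [Matrix.PosSemidef.sqrt, U, Matrix.mul_assoc]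
    _ = U * diagonal ((↑) ∘ hA.1.eigenvalues) * star U := by
        rw [hU, Matrix.mul_one, Matrix.mul_assoc U, diagonal_mul_diagonal]
        congr 3
        funext i
        simp only [Function.comp_apply, ← RCLike.ofReal_mul,
          Real.mul_self_sqrt (hA.eigenvalues_nonneg i)]

theorem Matrix.IsHermitian.range_eigenvalues_smul {A : Matrix n n 𝕜} (hA : A.IsHermitian) (c : ℝ)
    (hcA : (c • A).IsHermitian) :
    Set.range hcA.eigenvalues = c • Set.range hA.eigenvalues := by
  cases isEmpty_or_nonempty n
  · simp only [Set.range_eq_empty, Set.smul_set_empty]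
  · rw [← hA.spectrum_real_eq_range_eigenvalues, ← hcA.spectrum_real_eq_range_eigenvalues]
    exact spectrum.smul_eq_smul c A
      (hA.spectrum_real_eq_range_eigenvalues ▸ Set.range_nonempty _)

theorem Matrix.IsHermitian.iInf_eigenvalues_smul {A : Matrix n n 𝕜} (hA : A.IsHermitian) {c : ℝ}
    (hc : 0 ≤ c) (hcA : (c • A).IsHermitian) :
    ⨅ j, hcA.eigenvalues j = c * ⨅ j, hA.eigenvalues j := by
  rw [iInf, hA.range_eigenvalues_smul c hcA, Real.sInf_smul_of_nonneg hc, iInf, smul_eq_mul]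

end

theorem expected_projection_convenient_probabilities_general {n : ℕ}
    (A : Matrix (Fin n) (Fin n) ℝ) (hA : A.PosDef)
    (p : Fin n → ℝ) (hp : ∀ i, p i = A i i / A.trace)
    (Z : Fin n → Matrix (Fin n) (Fin n) ℝ)
    (hZ : ∀ i, Z i = (A i i)⁻¹ •
      (hA.posSemidef.sqrt * Matrix.single i i 1 * hA.posSemidef.sqrt)) :
    (∑ i, p i • Z i = (A.trace)⁻¹ • A) ∧
    ∀ hG : (∑ i, p i • Z i).IsHermitian,
      (⨅ j, hG.eigenvalues j) = (⨅ j, hA.1.eigenvalues j) / A.trace := by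
  set S := hA.posSemidef.sqrt
  have hsum : ∑ i, p i • Z i = (A.trace)⁻¹ • A :=
    calc ∑ i, p i • Z i = ∑ i, (A.trace)⁻¹ • (S * single i i 1 * S) := by
          refine Finset.sum_congr rfl fun i _ => ?_
          rw [hp, hZ, smul_smul, div_mul_eq_mul_div, mul_inv_cancel₀ hA.diag_pos.ne', one_div]
      _ = (A.trace)⁻¹ • A := by
          rw [← Finset.smul_sum, sum_mul_single_one_mul, hA.posSemidef.sqrt_mul_self]
  refine ⟨hsum, fun hG => ?_⟩
  generalize ∑ i, p i • Z i = G at hsum hG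
  subst hsum
  rw [hA.1.iInf_eigenvalues_smul (inv_nonneg.mpr hA.posSemidef.trace_nonneg) hG, div_eq_inv_mul]

/-- For an n×n real symmetric positive definite matrix A (n ≥ 1), with
pᵢ := Aᵢᵢ/Tr(A) and Zᵢ := (1/Aᵢᵢ) A^{1/2} eᵢ eᵢᵀ A^{1/2}, one has
Σ pᵢ Zᵢ = A/Tr(A); consequently the smallest eigenvalue of the expected
projection E[Z] equals λ_min(A)/Tr(A). -/
theorem expected_projection_convenient_probabilities {n : ℕ} (hn : 0 < n)
    (A : Matrix (Fin n) (Fin n) ℝ) (hA : A.PosDef)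
    (p : Fin n → ℝ) (hp : ∀ i, p i = A i i / A.trace)
    (Z : Fin n → Matrix (Fin n) (Fin n) ℝ)
    (hZ : ∀ i, Z i = (A i i)⁻¹ •
      (hA.posSemidef.sqrt * Matrix.single i i 1 * hA.posSemidef.sqrt)) :
    (∑ i, p i • Z i = (A.trace)⁻¹ • A) ∧
    ∀ hG : (∑ i, p i • Z i).IsHermitian,
      (⨅ j, hG.eigenvalues j) = (⨅ j, hA.1.eigenvalues j) / A.trace :=
  expected_projection_convenient_probabilities_general A hA p hp Z hZ
end

section
/- Let A be an n×n real symmetric positive definite matrix, S an n×τ real matrix such that SᵀAS is invertible, and X_k any n×n real matrix. With H := S(SᵀAS)⁻¹Sᵀ and X_{k+1} := H + (I − HA) X_k (I − AH), the residual satisfies the recursion X_{k+1} − A⁻¹ = (I − HA)(X_k − A⁻¹)(I − AH). -/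
open Matrix

/-- With A symmetric positive definite, SᵀAS invertible,
H := S(SᵀAS)⁻¹Sᵀ and X_{k+1} := H + (I − HA)X_k(I − AH), the residual satisfies
X_{k+1} − A⁻¹ = (I − HA)(X_k − A⁻¹)(I − AH). -/
theorem symmetric_sketch_and_project_residual {n τ : ℕ}
    (A : Matrix (Fin n) (Fin n) ℝ) (hA : A.PosDef)
    (S : Matrix (Fin n) (Fin τ) ℝ) (hS : IsUnit (Sᵀ * A * S))
    (Xk : Matrix (Fin n) (Fin n) ℝ)
    (H Xk1 : Matrix (Fin n) (Fin n) ℝ)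
    (hH : H = S * (Sᵀ * A * S)⁻¹ * Sᵀ)
    (hX1 : Xk1 = H + (1 - H * A) * Xk * (1 - A * H)) :
    Xk1 - A⁻¹ = (1 - H * A) * (Xk - A⁻¹) * (1 - A * H) := by
  have hAinv : IsUnit A.det := isUnit_iff_ne_zero.mpr hA.det_pos.ne'
  have hA1 : A⁻¹ * A = 1 := nonsing_inv_mul A hAinv
  have hA2 : A * A⁻¹ = 1 := mul_nonsing_inv A hAinv
  have hSinv : (Sᵀ * A * S)⁻¹ * (Sᵀ * A * S) = 1 :=
    nonsing_inv_mul _ (isUnit_iff_isUnit_det _ |>.mp hS)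
  have hHAH : H * A * H = H := by
    subst hH
    calc S * (Sᵀ * A * S)⁻¹ * Sᵀ * A * (S * (Sᵀ * A * S)⁻¹ * Sᵀ)
        = S * ((Sᵀ * A * S)⁻¹ * (Sᵀ * A * S)) * ((Sᵀ * A * S)⁻¹ * Sᵀ) := by
          simp only [Matrix.mul_assoc]
      _ = S * (Sᵀ * A * S)⁻¹ * Sᵀ := by rw [hSinv, Matrix.mul_one]; simp [Matrix.mul_assoc]
  subst hX1
  have key : (1 - H * A) * A⁻¹ * (1 - A * H) = A⁻¹ - H := by
    have : (1 - H * A) * A⁻¹ * (1 - A * H)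
        = A⁻¹ - H * (A * A⁻¹) - (A⁻¹ * A) * H + H * (A * A⁻¹) * A * H := by
      noncomm_ring
    rw [this, hA1, hA2]
    simp only [mul_one, one_mul]
    rw [show H * A * H = H from hHAH]
    abel
  calc H + (1 - H * A) * Xk * (1 - A * H) - A⁻¹
      = (1 - H * A) * Xk * (1 - A * H) - ((1 - H * A) * A⁻¹ * (1 - A * H)) := by
        rw [key]; noncomm_ring
    _ = (1 - H * A) * (Xk - A⁻¹) * (1 - A * H) := by noncomm_ring
end

section
/- Let P be an n×n real symmetric idempotent matrix (P = Pᵀ, P² = P), and set 𝐙 := I ⊗ I − (I − P) ⊗ (I − P), an n²×n² matrix. Then 𝐙 − P ⊗ I is positive semidefinite and (P ⊗ I + I ⊗ P) − 𝐙 is positive semidefinite; that is, P ⊗ I ⪯ 𝐙 ⪯ P ⊗ I + I ⊗ P in the Loewner order. -/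
open Matrix Kronecker

/-! Writing `Q = 1 - P`, bilinearity of `⊗ₖ` gives `𝐙 - P ⊗ I = Q ⊗ P` and
`P ⊗ I + I ⊗ P - 𝐙 = P ⊗ P`. Both `P` and `Q` are orthogonal projections, hence positive
semidefinite, and Kronecker products of positive semidefinite matrices are positive semidefinite. -/

namespace Matrix

variable {l m n p R : Type*}

theorem sub_kronecker [NonUnitalNonAssocRing R] (A₁ A₂ : Matrix l m R) (B : Matrix n p R) :
    (A₁ - A₂) ⊗ₖ B = A₁ ⊗ₖ B - A₂ ⊗ₖ B := by
  ext; simp [sub_mul]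

theorem kronecker_sub [NonUnitalNonAssocRing R] (A : Matrix l m R) (B₁ B₂ : Matrix n p R) :
    A ⊗ₖ (B₁ - B₂) = A ⊗ₖ B₁ - A ⊗ₖ B₂ := by
  ext; simp [mul_sub]

section Identities

variable [DecidableEq m] [DecidableEq n] [Ring R] (A : Matrix m m R) (B : Matrix n n R)

theorem one_sub_one_sub_kronecker_one_sub_sub_kronecker_one :
    1 - (1 - A) ⊗ₖ (1 - B) - A ⊗ₖ 1 = (1 - A) ⊗ₖ B := by
  rw [← one_kronecker_one]
  simp only [sub_kronecker, kronecker_sub]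
  abel

theorem kronecker_one_add_one_kronecker_sub_one_sub :
    A ⊗ₖ 1 + 1 ⊗ₖ B - (1 - (1 - A) ⊗ₖ (1 - B)) = A ⊗ₖ B := by
  rw [← one_kronecker_one]
  simp only [sub_kronecker, kronecker_sub]
  abel

end Identities

theorem IsSymm.isStarProjection [Fintype n] [Semiring R] [StarRing R] [TrivialStar R]
    {A : Matrix n n R} (hA : A.IsSymm) (hAA : A * A = A) : IsStarProjection A :=
  ⟨hAA, by rw [IsSelfAdjoint, star_eq_conjTranspose, conjTranspose_eq_transpose_of_trivial, hA]⟩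

open scoped ComplexOrder MatrixOrder in
theorem posSemidef_of_isStarProjection {𝕜 : Type*} [RCLike 𝕜] [Fintype n] {A : Matrix n n 𝕜}
    (hA : IsStarProjection A) : A.PosSemidef :=
  nonneg_iff_posSemidef.mp hA.nonneg

end Matrix

/-- For an n×n real symmetric idempotent matrix P and
𝐙 := I⊗I − (I−P)⊗(I−P), one has P⊗I ⪯ 𝐙 ⪯ P⊗I + I⊗P in the Loewner order. -/
theorem bigZ_loewner_bounds {n : ℕ}
    (P : Matrix (Fin n) (Fin n) ℝ) (hPsym : P.IsSymm) (hPidem : P * P = P) :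
    ((((1 : Matrix (Fin n × Fin n) (Fin n × Fin n) ℝ) - (1 - P) ⊗ₖ (1 - P))
        - P ⊗ₖ (1 : Matrix (Fin n) (Fin n) ℝ)).PosSemidef) ∧
    (((P ⊗ₖ (1 : Matrix (Fin n) (Fin n) ℝ) + (1 : Matrix (Fin n) (Fin n) ℝ) ⊗ₖ P)
        - ((1 : Matrix (Fin n × Fin n) (Fin n × Fin n) ℝ)
            - (1 - P) ⊗ₖ (1 - P))).PosSemidef) := by
  have hP : IsStarProjection P := hPsym.isStarProjection hPidem
  have hP_psd : P.PosSemidef := posSemidef_of_isStarProjection hP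
  have hQ_psd : (1 - P).PosSemidef := posSemidef_of_isStarProjection hP.one_sub
  rw [one_sub_one_sub_kronecker_one_sub_sub_kronecker_one,
    kronecker_one_add_one_kronecker_sub_one_sub]
  exact ⟨hQ_psd.kronecker hP_psd, hP_psd.kronecker hP_psd⟩
end

section
/- Let P be an n×n real symmetric idempotent matrix (P = Pᵀ, P² = P). Consider the linear map Z : ℝ^{n×n} → ℝ^{n×n} defined by Z(X) := X − (I − P) X (I − P). Then Z(X) = XP + PX(I − P) for all X; Z is self-adjoint with respect to the Frobenius inner product ⟨X, Y⟩ := Tr(Xᵀ Y); and Z is idempotent (Z(Z(X)) = Z(X) for all X). Hence Z is an orthogonal projection on the space ℝ^{n×n} equipped with the Frobenius inner product. -/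
open Matrix

/-- For an n×n real symmetric idempotent matrix P, the linear map
Z(X) := X − (I−P)X(I−P) on ℝ^{n×n} satisfies Z(X) = XP + PX(I−P) for all X, is
self-adjoint with respect to the Frobenius inner product ⟨X, Y⟩ = Tr(XᵀY), and is
idempotent; hence Z is an orthogonal projection on ℝ^{n×n} with the Frobenius
inner product. -/
theorem symmetry_preserving_Z_is_orthogonal_projection {n : ℕ}
    (P : Matrix (Fin n) (Fin n) ℝ) (hPsym : P.IsSymm) (hPidem : P * P = P)
    (Z : Matrix (Fin n) (Fin n) ℝ →ₗ[ℝ] Matrix (Fin n) (Fin n) ℝ)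
    (hZ : ∀ X, Z X = X - (1 - P) * X * (1 - P)) :
    (∀ X, Z X = X * P + P * X * (1 - P)) ∧
    (∀ X Y, ((Z X)ᵀ * Y).trace = (Xᵀ * Z Y).trace) ∧
    (∀ X, Z (Z X) = Z X) := by
  have hPt : Pᵀ = P := hPsym
  have hQt : (1 - P)ᵀ = 1 - P := by
    rw [transpose_sub, transpose_one, hPt]
  have hQidem : (1 - P) * (1 - P) = 1 - P := by
    simp only [Matrix.sub_mul, Matrix.mul_sub, hPidem, one_mul, mul_one]
    abel
  refine ⟨fun X => ?_, fun X Y => ?_, fun X => ?_⟩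
  · rw [hZ]
    have : (1 - P) * X * (1 - P) = X - X * P - P * X + P * X * P := by noncomm_ring
    rw [this]; noncomm_ring
  · rw [hZ, hZ, transpose_sub, Matrix.sub_mul Xᵀ ((1 - P) * X * (1 - P))ᵀ Y,
      Matrix.mul_sub Xᵀ Y ((1 - P) * Y * (1 - P)), trace_sub, trace_sub]
    congr 1
    rw [transpose_mul, transpose_mul, hQt]
    calc ((1 - P) * (Xᵀ * (1 - P)) * Y).trace
        = ((1 - P) * (Xᵀ * ((1 - P) * Y))).trace := by
          simp only [Matrix.mul_assoc]
      _ = ((Xᵀ * ((1 - P) * Y)) * (1 - P)).trace := trace_mul_comm _ _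
      _ = (Xᵀ * ((1 - P) * Y * (1 - P))).trace := by simp only [Matrix.mul_assoc]
  · rw [hZ (Z X), hZ X]
    have : (1 - P) * (X - (1 - P) * X * (1 - P)) * (1 - P) = 0 := by
      generalize hQ : (1 : Matrix (Fin n) (Fin n) ℝ) - P = Q at hQidem ⊢
      simp only [Matrix.mul_sub, Matrix.sub_mul, Matrix.mul_assoc, ← Matrix.mul_assoc Q Q,
        hQidem, sub_self]
    rw [this, sub_zero]
end
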